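/- arXiv:2305.12836 — 2 statements merged into one kernel-verified Lean document; each statement's English description precedes it below -/
import Mathlib

section
/- Let V be a finite-dimensional real inner product space with dim V = n+1 ≥ 2, B a topological space and k ≥ 1. Suppose there exist open sets V_1, …, V_k covering B × S(V), each invariant under (b,u) ↦ (b,−u), and continuous maps ψ_i : [−1,1] × V_i → S(V) with ψ_i(1,(b,u)) = u and ψ_i(−t,(b,−u)) = ψ_i(t,(b,u)). Then there exist open sets U_0, U_1, …, U_k covering B × S(V) × S(V), each invariant under the involution (b,u,v) ↦ (b,v,u), and continuous maps φ_i : [−1,1] × U_i → S(V) such that for all (b,u,v) ∈ U_i and t ∈ [−1,1]: φ_i(1,(b,u,v)) = u, φ_i(−1,(b,u,v)) = v, φ_i(−t,(b,v,u)) = φ_i(t,(b,u,v)), and φ_i(t,(b,u,u)) = u whenever (b,u,u) ∈ U_i. -/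
open Metric Set
open scoped RealInnerProductSpace

/-!
Pairs `(u, v)` with `u + v ≠ 0`, among them the diagonal, are joined by the normalized segment
from `v` to `u`. For `u ≠ v`, let `w` be the unit vector in the direction of `u - v` and pick `i`
with `(b, w) ∈ W i`; the path runs from `v` to `-w = ψ i (-1, (b, w))` along a normalized segment,
then along `ψ i (·, (b, w))` to `w`, then along a normalized segment to `u`. The segments avoid `0`
because `⟪w, u⟫ > 0 > ⟪w, v⟫`, and swapping `u` and `v` replaces `w` by `-w`, which by the
symmetry of `ψ i` reverses the path.
-/

noncomputable section

section Normalize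

variable {V : Type*} [NormedAddCommGroup V] [NormedSpace ℝ V]

open Classical in
def sphereNormalize (x : V) (e : sphere (0 : V) 1) : sphere (0 : V) 1 :=
  if hx : x = 0 then e else
    ⟨NormedSpace.normalize x, mem_sphere_zero_iff_norm.mpr (NormedSpace.norm_normalize hx)⟩

lemma coe_sphereNormalize {x : V} (hx : x ≠ 0) (e : sphere (0 : V) 1) :
    (sphereNormalize x e : V) = NormedSpace.normalize x := by
  simp [sphereNormalize, hx]

lemma sphereNormalize_congr_fallback {x : V} (hx : x ≠ 0) (e e' : sphere (0 : V) 1) :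
    sphereNormalize x e = sphereNormalize x e' := by
  simp [sphereNormalize, hx]

lemma sphereNormalize_eq_of_sameRay {x : V} (hx : x ≠ 0) {u : sphere (0 : V) 1}
    (h : SameRay ℝ x u) (e : sphere (0 : V) 1) : sphereNormalize x e = u := by
  have hu : ‖(u : V)‖ = 1 := norm_eq_of_mem_sphere u
  ext
  rw [coe_sphereNormalize hx, NormedSpace.normalize,
    h.inv_norm_smul_eq hx (ne_zero_of_mem_unit_sphere u), hu, inv_one, one_smul]

lemma ContinuousOn.sphereNormalize {α : Type*} [TopologicalSpace α] {F : α → V} {s : Set α}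
    (hF : ContinuousOn F s) (h0 : ∀ a ∈ s, F a ≠ 0) (e : α → sphere (0 : V) 1) :
    ContinuousOn (fun a => sphereNormalize (F a) (e a)) s := by
  rw [Topology.IsInducing.subtypeVal.continuousOn_iff]
  refine ((hF.norm.inv₀ fun a ha => norm_ne_zero_iff.mpr (h0 a ha)).smul hF).congr fun a ha => ?_
  simp [coe_sphereNormalize (h0 a ha), NormedSpace.normalize]

end Normalize

structure IsSymmetricPlanner {B Y : Type*} [TopologicalSpace B] [TopologicalSpace Y]
    (U : Set (B × Y × Y)) (φ : ℝ × (B × Y × Y) → Y) : Prop where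
  isOpen : IsOpen U
  swap_mem : ∀ p ∈ U, (p.1, p.2.2, p.2.1) ∈ U
  continuousOn : ContinuousOn φ (Icc (-1 : ℝ) 1 ×ˢ U)
  apply_one : ∀ p ∈ U, φ (1, p) = p.2.1
  apply_neg_one : ∀ p ∈ U, φ (-1, p) = p.2.2
  apply_neg_swap : ∀ p ∈ U, ∀ t ∈ Icc (-1 : ℝ) 1, φ (-t, (p.1, p.2.2, p.2.1)) = φ (t, p)
  apply_diag : ∀ p ∈ U, p.2.1 = p.2.2 → ∀ t ∈ Icc (-1 : ℝ) 1, φ (t, p) = p.2.1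

theorem isSymmetricPlanner_sphereNormalize {V B : Type*} [NormedAddCommGroup V] [NormedSpace ℝ V]
    [TopologicalSpace B] {U : Set (B × sphere (0 : V) 1 × sphere (0 : V) 1)}
    {F : ℝ × (B × sphere (0 : V) 1 × sphere (0 : V) 1) → V}
    (hU : IsOpen U) (hU_swap : ∀ p ∈ U, (p.1, p.2.2, p.2.1) ∈ U)
    (hF : ContinuousOn F (Icc (-1 : ℝ) 1 ×ˢ U))
    (hF_ne : ∀ p ∈ U, ∀ t ∈ Icc (-1 : ℝ) 1, F (t, p) ≠ 0)
    (hF_one : ∀ p ∈ U, SameRay ℝ (F (1, p)) p.2.1)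
    (hF_neg_one : ∀ p ∈ U, SameRay ℝ (F (-1, p)) p.2.2)
    (hF_swap : ∀ p ∈ U, ∀ t ∈ Icc (-1 : ℝ) 1, F (-t, (p.1, p.2.2, p.2.1)) = F (t, p))
    (hF_diag : ∀ p ∈ U, p.2.1 = p.2.2 → ∀ t ∈ Icc (-1 : ℝ) 1, SameRay ℝ (F (t, p)) p.2.1) :
    IsSymmetricPlanner U fun x => sphereNormalize (F x) x.2.2.1 := by
  have one_mem : (1 : ℝ) ∈ Icc (-1 : ℝ) 1 := by norm_num
  have neg_one_mem : (-1 : ℝ) ∈ Icc (-1 : ℝ) 1 := by norm_num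
  refine ⟨hU, hU_swap, hF.sphereNormalize (fun x hx => hF_ne x.2 hx.2 x.1 hx.1) _,
    fun p hp => ?_, fun p hp => ?_, fun p hp t ht => ?_, fun p hp hdiag t ht => ?_⟩
  · exact sphereNormalize_eq_of_sameRay (hF_ne p hp 1 one_mem) (hF_one p hp) _
  · exact sphereNormalize_eq_of_sameRay (hF_ne p hp _ neg_one_mem) (hF_neg_one p hp) _
  · simp only [hF_swap p hp t ht]
    exact sphereNormalize_congr_fallback (hF_ne p hp t ht) _ _
  · exact sphereNormalize_eq_of_sameRay (hF_ne p hp t ht) (hF_diag p hp hdiag t ht) _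

def ramp (t : ℝ) : ℝ := max 0 (2 * t - 1)

def clampDouble (t : ℝ) : ℝ := max (-1) (min 1 (2 * t))

@[fun_prop]
lemma continuous_ramp : Continuous ramp := by unfold ramp; fun_prop

@[fun_prop]
lemma continuous_clampDouble : Continuous clampDouble := by unfold clampDouble; fun_prop

lemma clampDouble_mem_Icc (t : ℝ) : clampDouble t ∈ Icc (-1 : ℝ) 1 :=
  ⟨le_max_left _ _, max_le (by norm_num) (min_le_left _ _)⟩

lemma clampDouble_neg (t : ℝ) : clampDouble (-t) = -clampDouble t := by
  simp only [clampDouble, max_def, min_def]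
  split_ifs <;> linarith

lemma ramp_eq_zero {t : ℝ} (ht : t ≤ 1 / 2) : ramp t = 0 := max_eq_left (by linarith)

lemma ramp_of_half_le {t : ℝ} (ht : 1 / 2 ≤ t) : ramp t = 2 * t - 1 := max_eq_right (by linarith)

lemma clampDouble_of_half_le {t : ℝ} (ht : 1 / 2 ≤ t) : clampDouble t = 1 := by
  rw [clampDouble, min_eq_left (by linarith), max_eq_right (by norm_num)]

section InnerProductSpace

variable {V : Type*} [NormedAddCommGroup V] [InnerProductSpace ℝ V]

lemma inner_one_add_smul_add_one_sub_smul {u v : V} (h : ‖u‖ = ‖v‖) (t : ℝ) :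
    ⟪(1 + t) • u + (1 - t) • v, u + v⟫ = ‖u + v‖ ^ 2 := by
  rw [← real_inner_self_eq_norm_sq]
  simp only [inner_add_left, inner_add_right, real_inner_smul_left, real_inner_self_eq_norm_sq, h,
    real_inner_comm u v]
  ring

lemma one_add_smul_add_one_sub_smul_ne_zero {u v : V} (h : ‖u‖ = ‖v‖) (huv : u + v ≠ 0) (t : ℝ) :
    (1 + t) • u + (1 - t) • v ≠ 0 := by
  intro h0
  have := inner_one_add_smul_add_one_sub_smul h t
  rw [h0, inner_zero_left] at this
  exact huv (by simpa using this.symm)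

lemma inner_sub_pos_of_norm_eq {u v : V} (h : ‖u‖ = ‖v‖) (huv : u ≠ v) : 0 < ⟪u, u - v⟫ := by
  have key : ⟪u, u - v⟫ = ‖u - v‖ ^ 2 / 2 := by
    rw [← real_inner_self_eq_norm_sq]
    simp only [inner_sub_left, inner_sub_right, real_inner_self_eq_norm_sq, h, real_inner_comm u v]
    ring
  rw [key]
  have := sub_ne_zero.mpr huv
  positivity

lemma smul_add_smul_ne_zero_of_inner_pos {w x : V} {a b : ℝ} (ha : 0 ≤ a) (hb : 0 < b)
    (hwx : 0 < ⟪w, x⟫) : a • w + b • x ≠ 0 := by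
  intro h0
  have : 0 < ⟪w, a • w + b • x⟫ := by
    rw [inner_add_right, real_inner_smul_right, real_inner_smul_right]
    have := real_inner_self_nonneg (x := w)
    positivity
  rw [h0, inner_zero_right] at this
  exact this.false

variable {B : Type*}

def nonAntipodal : Set (B × sphere (0 : V) 1 × sphere (0 : V) 1) :=
  {p | (p.2.1 : V) + p.2.2 ≠ 0}

lemma mem_nonAntipodal_of_eq {p : B × sphere (0 : V) 1 × sphere (0 : V) 1}
    (hp : (p.2.1 : V) = p.2.2) : p ∈ nonAntipodal := by
  change (p.2.1 : V) + p.2.2 ≠ 0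
  rw [← hp, ← two_smul ℝ]
  exact smul_ne_zero two_ne_zero (ne_zero_of_mem_unit_sphere _)

def chordDirection (p : B × sphere (0 : V) 1 × sphere (0 : V) 1) : sphere (0 : V) 1 :=
  sphereNormalize ((p.2.1 : V) - p.2.2) p.2.1

def chordSet (W : Set (B × sphere (0 : V) 1)) : Set (B × sphere (0 : V) 1 × sphere (0 : V) 1) :=
  {p | (p.2.1 : V) ≠ p.2.2 ∧ (p.1, chordDirection p) ∈ W}

lemma chordDirection_swap {p : B × sphere (0 : V) 1 × sphere (0 : V) 1} (hp : (p.2.1 : V) ≠ p.2.2) :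
    chordDirection (p.1, p.2.2, p.2.1) = -chordDirection p := by
  ext
  rw [coe_neg_sphere, chordDirection, chordDirection, coe_sphereNormalize (sub_ne_zero.mpr hp.symm),
    coe_sphereNormalize (sub_ne_zero.mpr hp), ← neg_sub, NormedSpace.normalize_neg]

lemma inner_chordDirection_pos {p : B × sphere (0 : V) 1 × sphere (0 : V) 1}
    (hp : (p.2.1 : V) ≠ p.2.2) :
    0 < ⟪(chordDirection p : V), p.2.1⟫ := by
  rw [chordDirection, coe_sphereNormalize (sub_ne_zero.mpr hp), NormedSpace.normalize,
    real_inner_smul_left, real_inner_comm]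
  have := norm_pos_iff.mpr (sub_ne_zero.mpr hp)
  have := inner_sub_pos_of_norm_eq (by simp) hp
  positivity

lemma swap_mem_chordSet {W : Set (B × sphere (0 : V) 1)} (hW : ∀ q ∈ W, (q.1, -q.2) ∈ W)
    {p : B × sphere (0 : V) 1 × sphere (0 : V) 1} (hp : p ∈ chordSet W) :
    (p.1, p.2.2, p.2.1) ∈ chordSet W := by
  refine ⟨hp.1.symm, ?_⟩
  rw [chordDirection_swap hp.1]
  exact hW _ hp.2

/-- With `w = chordDirection p`: `ψ (2t, (b, w))` for `|t| ≤ 1/2`, the segment from `w` to `u` for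
`t ≥ 1/2` and the segment from `v` to `ψ (-1, (b, w)) = -w` for `t ≤ -1/2`. -/
def chordPath (ψ : ℝ × (B × sphere (0 : V) 1) → sphere (0 : V) 1)
    (x : ℝ × (B × sphere (0 : V) 1 × sphere (0 : V) 1)) : V :=
  (1 - ramp x.1 - ramp (-x.1)) • (ψ (clampDouble x.1, (x.2.1, chordDirection x.2)) : V)
    + ramp x.1 • (x.2.2.1 : V) + ramp (-x.1) • (x.2.2.2 : V)

section ChordPath

variable {W : Set (B × sphere (0 : V) 1)} {ψ : ℝ × (B × sphere (0 : V) 1) → sphere (0 : V) 1}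

lemma chordPath_one (p : B × sphere (0 : V) 1 × sphere (0 : V) 1) : chordPath ψ (1, p) = p.2.1 := by
  norm_num [chordPath, ramp]

lemma chordPath_neg_one (p : B × sphere (0 : V) 1 × sphere (0 : V) 1) :
    chordPath ψ (-1, p) = p.2.2 := by
  norm_num [chordPath, ramp]

lemma chordPath_neg_swap (hψ : ∀ q ∈ W, ∀ t ∈ Icc (-1 : ℝ) 1, ψ (-t, (q.1, -q.2)) = ψ (t, q))
    {p : B × sphere (0 : V) 1 × sphere (0 : V) 1} (hp : p ∈ chordSet W) (t : ℝ) :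
    chordPath ψ (-t, (p.1, p.2.2, p.2.1)) = chordPath ψ (t, p) := by
  simp only [chordPath, neg_neg, chordDirection_swap hp.1, clampDouble_neg,
    hψ _ hp.2 _ (clampDouble_mem_Icc t)]
  rw [add_right_comm, sub_right_comm]

lemma chordPath_of_abs_le_half {t : ℝ} (ht : |t| ≤ 1 / 2)
    (p : B × sphere (0 : V) 1 × sphere (0 : V) 1) :
    chordPath ψ (t, p) = ψ (clampDouble t, (p.1, chordDirection p)) := by
  rw [abs_le] at ht
  simp [chordPath, ramp_eq_zero ht.2, ramp_eq_zero (show -t ≤ 1 / 2 by linarith)]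

lemma chordPath_of_half_le (hψ : ∀ q ∈ W, ψ (1, q) = q.2) {t : ℝ} (ht : 1 / 2 ≤ t)
    {p : B × sphere (0 : V) 1 × sphere (0 : V) 1} (hp : p ∈ chordSet W) :
    chordPath ψ (t, p) = (2 - 2 * t) • (chordDirection p : V) + (2 * t - 1) • (p.2.1 : V) := by
  simp only [chordPath, ramp_of_half_le ht, ramp_eq_zero (show -t ≤ 1 / 2 by linarith),
    clampDouble_of_half_le ht, hψ _ hp.2]
  rw [zero_smul, add_zero]
  ring_nf

lemma chordPath_ne_zero (hψ_one : ∀ q ∈ W, ψ (1, q) = q.2)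
    (hψ_neg : ∀ q ∈ W, ∀ t ∈ Icc (-1 : ℝ) 1, ψ (-t, (q.1, -q.2)) = ψ (t, q))
    (hW : ∀ q ∈ W, (q.1, -q.2) ∈ W) {p : B × sphere (0 : V) 1 × sphere (0 : V) 1}
    (hp : p ∈ chordSet W) {t : ℝ} (ht : t ∈ Icc (-1 : ℝ) 1) : chordPath ψ (t, p) ≠ 0 := by
  have of_half_lt {t : ℝ} (ht₁ : 1 / 2 < t) (ht₂ : t ≤ 1) {p} (hp : p ∈ chordSet W) :
      chordPath ψ (t, p) ≠ 0 := by
    rw [chordPath_of_half_le hψ_one ht₁.le hp]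
    exact smul_add_smul_ne_zero_of_inner_pos (by linarith) (by linarith)
      (inner_chordDirection_pos hp.1)
  rcases le_or_gt |t| (1 / 2) with hsmall | hlarge
  · rw [chordPath_of_abs_le_half hsmall]
    exact ne_zero_of_mem_unit_sphere _
  rcases lt_abs.mp hlarge with hpos | hneg
  · exact of_half_lt hpos ht.2 hp
  · rw [← chordPath_neg_swap hψ_neg hp]
    exact of_half_lt hneg (by linarith [ht.1]) (swap_mem_chordSet hW hp)

end ChordPath

variable [TopologicalSpace B]

theorem exists_isSymmetricPlanner_nonAntipodal :
    ∃ φ, IsSymmetricPlanner (nonAntipodal : Set (B × sphere (0 : V) 1 × sphere (0 : V) 1)) φ := by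
  have hnorm (u v : sphere (0 : V) 1) : ‖(u : V)‖ = ‖(v : V)‖ := by simp
  refine ⟨_, isSymmetricPlanner_sphereNormalize
    (F := fun x => (1 + x.1) • (x.2.2.1 : V) + (1 - x.1) • (x.2.2.2 : V))
    (isOpen_ne_fun (by fun_prop) continuous_const)
    (fun p hp => by simpa [nonAntipodal, add_comm] using hp)
    (Continuous.continuousOn (by fun_prop))
    (fun p hp t _ => one_add_smul_add_one_sub_smul_ne_zero (hnorm _ _) hp t)
    (fun p _ => by norm_num)
    (fun p _ => by norm_num)
    (fun p _ t _ => by rw [add_comm]; ring_nf)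
    (fun p _ hdiag t _ => by
      simp only [hdiag, ← add_smul]
      ring_nf
      exact SameRay.sameRay_pos_smul_left _ two_pos)⟩

lemma continuousOn_chordDirection :
    ContinuousOn (chordDirection : B × sphere (0 : V) 1 × sphere (0 : V) 1 → sphere (0 : V) 1)
      {p | (p.2.1 : V) ≠ p.2.2} :=
  ContinuousOn.sphereNormalize (Continuous.continuousOn (by fun_prop))
    (fun _ hp => sub_ne_zero.mpr hp) _

lemma isOpen_chordSet {W : Set (B × sphere (0 : V) 1)} (hW : IsOpen W) : IsOpen (chordSet W) :=
  (continuous_fst.continuousOn.prodMk continuousOn_chordDirection).isOpen_inter_preimage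
    (isOpen_ne_fun (by fun_prop) (by fun_prop)) hW

lemma continuousOn_chordPath {W : Set (B × sphere (0 : V) 1)}
    {ψ : ℝ × (B × sphere (0 : V) 1) → sphere (0 : V) 1}
    (hψ : ContinuousOn ψ (Icc (-1 : ℝ) 1 ×ˢ W)) :
    ContinuousOn (chordPath ψ) (Icc (-1 : ℝ) 1 ×ˢ chordSet W) := by
  have hg : ContinuousOn (fun x : ℝ × (B × sphere (0 : V) 1 × sphere (0 : V) 1) =>
      (clampDouble x.1, (x.2.1, chordDirection x.2))) (Icc (-1 : ℝ) 1 ×ˢ chordSet W) :=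
    (continuous_clampDouble.comp continuous_fst).continuousOn.prodMk
      ((continuous_fst.comp continuous_snd).continuousOn.prodMk
        (continuousOn_chordDirection.comp continuous_snd.continuousOn fun x hx => hx.2.1))
  have hψg := continuous_subtype_val.comp_continuousOn
    (hψ.comp hg fun x hx => ⟨clampDouble_mem_Icc _, hx.2.2⟩)
  unfold chordPath
  fun_prop

theorem exists_isSymmetricPlanner_chordSet {W : Set (B × sphere (0 : V) 1)}
    {ψ : ℝ × (B × sphere (0 : V) 1) → sphere (0 : V) 1} (hW_open : IsOpen W)
    (hW_neg : ∀ q ∈ W, (q.1, -q.2) ∈ W) (hψ_cont : ContinuousOn ψ (Icc (-1 : ℝ) 1 ×ˢ W))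
    (hψ_one : ∀ q ∈ W, ψ (1, q) = q.2)
    (hψ_neg : ∀ q ∈ W, ∀ t ∈ Icc (-1 : ℝ) 1, ψ (-t, (q.1, -q.2)) = ψ (t, q)) :
    ∃ φ, IsSymmetricPlanner (chordSet W) φ :=
  ⟨_, isSymmetricPlanner_sphereNormalize (isOpen_chordSet hW_open)
    (fun _ hp => swap_mem_chordSet hW_neg hp) (continuousOn_chordPath hψ_cont)
    (fun _ hp _ ht => chordPath_ne_zero hψ_one hψ_neg hW_neg hp ht)
    (fun p _ => chordPath_one p ▸ SameRay.refl _) (fun p _ => chordPath_neg_one p ▸ SameRay.refl _)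
    (fun _ hp t _ => chordPath_neg_swap hψ_neg hp t)
    (fun _ hp hdiag => absurd (congrArg Subtype.val hdiag) hp.1)⟩

end InnerProductSpace

end

theorem stmt8_general {V : Type*} [NormedAddCommGroup V] [InnerProductSpace ℝ V]
    {B : Type*} [TopologicalSpace B] {k : ℕ}
    (W : Fin k → Set (B × Metric.sphere (0 : V) 1))
    (ψ : Fin k → ℝ × (B × Metric.sphere (0 : V) 1) → Metric.sphere (0 : V) 1)
    (hWopen : ∀ i, IsOpen (W i))
    (hWcover : (⋃ i, W i) = Set.univ)
    (hWsymm : ∀ i, ∀ p ∈ W i, (p.1, -p.2) ∈ W i)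
    (hψcont : ∀ i, ContinuousOn (ψ i) (Set.Icc (-1 : ℝ) 1 ×ˢ W i))
    (hψ1 : ∀ i, ∀ p ∈ W i, ψ i (1, p) = p.2)
    (hψsymm : ∀ i, ∀ p ∈ W i, ∀ t ∈ Set.Icc (-1 : ℝ) 1, ψ i (-t, (p.1, -p.2)) = ψ i (t, p)) :
    ∃ (U : Fin (k + 1) → Set (B × Metric.sphere (0 : V) 1 × Metric.sphere (0 : V) 1))
      (φ : Fin (k + 1) → ℝ × (B × Metric.sphere (0 : V) 1 × Metric.sphere (0 : V) 1) →
        Metric.sphere (0 : V) 1),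
      (∀ i, IsOpen (U i)) ∧
      (⋃ i, U i) = Set.univ ∧
      (∀ i, ∀ p ∈ U i, (p.1, p.2.2, p.2.1) ∈ U i) ∧
      (∀ i, ContinuousOn (φ i) (Set.Icc (-1 : ℝ) 1 ×ˢ U i)) ∧
      (∀ i, ∀ p ∈ U i, φ i (1, p) = p.2.1) ∧
      (∀ i, ∀ p ∈ U i, φ i (-1, p) = p.2.2) ∧
      (∀ i, ∀ p ∈ U i, ∀ t ∈ Set.Icc (-1 : ℝ) 1,
        φ i (-t, (p.1, p.2.2, p.2.1)) = φ i (t, p)) ∧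
      (∀ i, ∀ p ∈ U i, p.2.1 = p.2.2 → ∀ t ∈ Set.Icc (-1 : ℝ) 1, φ i (t, p) = p.2.1) := by
  obtain ⟨φ₀, hφ₀⟩ := exists_isSymmetricPlanner_nonAntipodal (V := V) (B := B)
  choose φ hφ using fun j => exists_isSymmetricPlanner_chordSet (hWopen j) (hWsymm j)
    (hψcont j) (hψ1 j) (hψsymm j)
  let U : Fin (k + 1) → Set (B × sphere (0 : V) 1 × sphere (0 : V) 1) :=
    Fin.cases nonAntipodal fun j => chordSet (W j)
  have hU : ∀ i, IsSymmetricPlanner (U i) (Fin.cases φ₀ φ i) := Fin.cases hφ₀ hφ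
  refine ⟨U, Fin.cases φ₀ φ, fun i => (hU i).isOpen, ?_, fun i => (hU i).swap_mem,
    fun i => (hU i).continuousOn, fun i => (hU i).apply_one, fun i => (hU i).apply_neg_one,
    fun i => (hU i).apply_neg_swap, fun i => (hU i).apply_diag⟩
  refine eq_univ_of_forall fun p => mem_iUnion.mpr ?_
  by_cases hp : (p.2.1 : V) = p.2.2
  · exact ⟨0, mem_nonAntipodal_of_eq hp⟩
  · obtain ⟨j, hj⟩ := mem_iUnion.mp (hWcover ▸ mem_univ (p.1, chordDirection p))
    exact ⟨j.succ, hp, hj⟩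

/-- Theorem 2.9 (symmetrized version), implication (2) ⟹ (3), for a trivialized
bundle: from equivariant fibrewise paths reversing the antipodal map one
constructs symmetric fibrewise motion planners fixing the diagonal. -/
theorem stmt8 {V : Type*} [NormedAddCommGroup V] [InnerProductSpace ℝ V]
    [FiniteDimensional ℝ V] {n : ℕ} (hn : 1 ≤ n) (hdim : Module.finrank ℝ V = n + 1)
    {B : Type*} [TopologicalSpace B] {k : ℕ} (hk : 1 ≤ k)
    (W : Fin k → Set (B × Metric.sphere (0 : V) 1))
    (ψ : Fin k → ℝ × (B × Metric.sphere (0 : V) 1) → Metric.sphere (0 : V) 1)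
    (hWopen : ∀ i, IsOpen (W i))
    (hWcover : (⋃ i, W i) = Set.univ)
    (hWsymm : ∀ i, ∀ p ∈ W i, (p.1, -p.2) ∈ W i)
    (hψcont : ∀ i, ContinuousOn (ψ i) (Set.Icc (-1 : ℝ) 1 ×ˢ W i))
    (hψ1 : ∀ i, ∀ p ∈ W i, ψ i (1, p) = p.2)
    (hψsymm : ∀ i, ∀ p ∈ W i, ∀ t ∈ Set.Icc (-1 : ℝ) 1, ψ i (-t, (p.1, -p.2)) = ψ i (t, p)) :
    ∃ (U : Fin (k + 1) → Set (B × Metric.sphere (0 : V) 1 × Metric.sphere (0 : V) 1))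
      (φ : Fin (k + 1) → ℝ × (B × Metric.sphere (0 : V) 1 × Metric.sphere (0 : V) 1) →
        Metric.sphere (0 : V) 1),
      (∀ i, IsOpen (U i)) ∧
      (⋃ i, U i) = Set.univ ∧
      (∀ i, ∀ p ∈ U i, (p.1, p.2.2, p.2.1) ∈ U i) ∧
      (∀ i, ContinuousOn (φ i) (Set.Icc (-1 : ℝ) 1 ×ˢ U i)) ∧
      (∀ i, ∀ p ∈ U i, φ i (1, p) = p.2.1) ∧
      (∀ i, ∀ p ∈ U i, φ i (-1, p) = p.2.2) ∧
      (∀ i, ∀ p ∈ U i, ∀ t ∈ Set.Icc (-1 : ℝ) 1,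
        φ i (-t, (p.1, p.2.2, p.2.1)) = φ i (t, p)) ∧
      (∀ i, ∀ p ∈ U i, p.2.1 = p.2.2 → ∀ t ∈ Set.Icc (-1 : ℝ) 1, φ i (t, p) = p.2.1) :=
  stmt8_general W ψ hWopen hWcover hWsymm hψcont hψ1 hψsymm
end

section
/- Let V be a finite-dimensional real inner product space with dim V = n+1 ≥ 2, B a compact metric space and k ≥ 1. Suppose there exist open sets U′_0, …, U′_k covering B × S(V) × S(V), each invariant under the involution (b,u,v) ↦ (b,v,u), and continuous maps φ′_i : [−1,1] × U′_i → S(V) satisfying φ′_i(1,(b,u,v)) = u, φ′_i(−1,(b,u,v)) = v and φ′_i(−t,(b,v,u)) = φ′_i(t,(b,u,v)) for all (b,u,v) ∈ U′_i and t ∈ [−1,1]. Then there exist open sets U_0, …, U_k covering B × S(V) × S(V), each invariant under (b,u,v) ↦ (b,v,u), and continuous maps φ_i : [−1,1] × U_i → S(V) satisfying, in addition to the three conditions above (with U_i, φ_i in place of U′_i, φ′_i), the diagonal condition φ_i(t,(b,u,u)) = u for all t ∈ [−1,1] whenever (b,u,u) ∈ U_i. -/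
/-!
At a diagonal point `p = (b, u, u)` a symmetric planner `f` gives an even loop `t ↦ f (t, p)` at
`u`, not necessarily constant. Its failure to be even is measured by
`evenDefect f p = sup_{s ∈ [0, 1]} ‖f (s, p) - f (-s, p)‖ ∈ [0, 2]`; put `m = 1 - evenDefect f p / 2`.
The new path `chordPlanner f` follows `f` from `1` down to the parameter `m`, then the normalised
chord from `f (m, p)` to `f (-m, p)`, then `f` again from `-m` to `-1`. On the diagonal
`evenDefect f p = 0`, so `m = 1` and the chord joins `u` to itself. The chord never passes through
`0`: that would need `f (m, p) = -f (-m, p)`, hence `evenDefect f p = 2` and `m = 0`, but then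
both ends are `f (0, p)`. Since `evenDefect` is invariant under `(b, u, v) ↦ (b, v, u)`, the new
planner is again symmetric, on the same open sets.
-/

open Set Metric

noncomputable section

variable {V : Type*} [NormedAddCommGroup V] {X : Type*}

def evenDefect (f : ℝ × X → sphere (0 : V) 1) (p : X) : ℝ :=
  sSup ((fun s => ‖(f (s, p) : V) - f (-s, p)‖) '' Icc 0 1)

def chordParam (f : ℝ × X → sphere (0 : V) 1) (q : ℝ × X) : ℝ :=
  max |q.1| (1 - evenDefect f q.2 / 2)

section

variable {f : ℝ × X → sphere (0 : V) 1}

lemma norm_sub_le_two_of_mem_sphere (x y : sphere (0 : V) 1) : ‖(x : V) - y‖ ≤ 2 := by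
  simpa [one_add_one_eq_two] using norm_sub_le (x : V) y

lemma le_evenDefect (p : X) {s : ℝ} (hs : s ∈ Icc (0 : ℝ) 1) :
    ‖(f (s, p) : V) - f (-s, p)‖ ≤ evenDefect f p :=
  le_csSup ⟨2, forall_mem_image.2 fun _ _ => norm_sub_le_two_of_mem_sphere _ _⟩
    (mem_image_of_mem _ hs)

lemma evenDefect_nonneg (p : X) : 0 ≤ evenDefect f p :=
  (norm_nonneg _).trans (le_evenDefect (f := f) p (left_mem_Icc.2 zero_le_one))

lemma evenDefect_eq_zero {p : X} (heven : ∀ s ∈ Icc (-1 : ℝ) 1, f (-s, p) = f (s, p)) :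
    evenDefect f p = 0 := by
  have hzero : EqOn (fun s => ‖(f (s, p) : V) - f (-s, p)‖) 0 (Icc 0 1) := fun s hs => by
    simp [heven s ⟨by linarith [hs.1], hs.2⟩]
  rw [evenDefect, image_congr hzero, Pi.zero_def, (nonempty_Icc.2 zero_le_one).image_const,
    csSup_singleton]

lemma evenDefect_eq_of_reverse {p p' : X}
    (hrev : ∀ s ∈ Icc (-1 : ℝ) 1, f (-s, p') = f (s, p)) :
    evenDefect f p' = evenDefect f p := by
  have hnorm : EqOn (fun s => ‖(f (s, p') : V) - f (-s, p')‖)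
      (fun s => ‖(f (s, p) : V) - f (-s, p)‖) (Icc 0 1) := fun s hs => by
    have h := hrev (-s) ⟨by linarith [hs.2], by linarith [hs.1]⟩
    rw [neg_neg] at h
    simp only [h, hrev s ⟨by linarith [hs.1], hs.2⟩, norm_sub_rev]
  rw [evenDefect, evenDefect, image_congr hnorm]

lemma chordParam_mem_Icc {q : ℝ × X} (hq : q.1 ∈ Icc (-1 : ℝ) 1) :
    chordParam f q ∈ Icc (0 : ℝ) 1 :=
  ⟨(abs_nonneg _).trans (le_max_left _ _),
    max_le (abs_le.2 hq) (by linarith [evenDefect_nonneg (f := f) q.2])⟩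

lemma chordParam_of_abs_eq_one {q : ℝ × X} (hq : |q.1| = 1) : chordParam f q = 1 := by
  rw [chordParam, hq]
  exact max_eq_left (by linarith [evenDefect_nonneg (f := f) q.2])

lemma chordParam_of_evenDefect_eq_zero {q : ℝ × X} (hq : q.1 ∈ Icc (-1 : ℝ) 1)
    (hD : evenDefect f q.2 = 0) : chordParam f q = 1 := by
  rw [chordParam, hD]
  norm_num [abs_le.2 hq]

variable [TopologicalSpace X] {U : Set X}

lemma continuousOn_evenDefect (hf : ContinuousOn f (Icc (-1) 1 ×ˢ U)) :
    ContinuousOn (evenDefect f) U := by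
  have hplus : Continuous fun x : U × Icc (0 : ℝ) 1 => (f (x.2, x.1) : V) :=
    continuous_subtype_val.comp <| hf.comp_continuous (by fun_prop)
      fun x => ⟨⟨by linarith [x.2.2.1], x.2.2.2⟩, x.1.2⟩
  have hminus : Continuous fun x : U × Icc (0 : ℝ) 1 => (f (-x.2, x.1) : V) :=
    continuous_subtype_val.comp <| hf.comp_continuous (by fun_prop)
      fun x => ⟨⟨by linarith [x.2.2.2], by linarith [x.2.2.1]⟩, x.1.2⟩
  have hsup : U.domRestrict (evenDefect f) = fun p : U => sSup ((fun s : Icc (0 : ℝ) 1 =>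
      ‖(f (s, p) : V) - f (-s, p)‖) '' univ) := by
    funext p
    rw [image_univ]
    exact congrArg sSup (image_eq_range _ _)
  rw [continuousOn_iff_continuous_domRestrict, hsup]
  exact isCompact_univ.continuous_sSup (hplus.sub hminus).norm

lemma continuousOn_chordParam (hf : ContinuousOn f (Icc (-1) 1 ×ˢ U)) :
    ContinuousOn (chordParam f) (Icc (-1) 1 ×ˢ U) :=
  ContinuousOn.sup continuous_fst.abs.continuousOn
    (continuousOn_const.sub (((continuousOn_evenDefect hf).comp continuousOn_snd
      fun _ hq => hq.2).div_const 2))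

end

variable [NormedSpace ℝ V]

def chordSum (f : ℝ × X → sphere (0 : V) 1) (q : ℝ × X) : V :=
  (1 + q.1) • (f (chordParam f q, q.2) : V) + (1 - q.1) • (f (-chordParam f q, q.2) : V)

section

variable {f : ℝ × X → sphere (0 : V) 1}

lemma chordSum_of_chordParam_eq_one {q : ℝ × X} (h : chordParam f q = 1) :
    chordSum f q = (1 + q.1) • (f (1, q.2) : V) + (1 - q.1) • (f (-1, q.2) : V) := by
  rw [chordSum, h]

lemma abs_eq_abs_of_smul_add_smul_eq_zero {x y : V} (hx : ‖x‖ = 1) (hy : ‖y‖ = 1) {a b : ℝ}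
    (h : a • x + b • y = 0) : |a| = |b| := by
  have := congrArg norm (eq_neg_of_add_eq_zero_left h)
  rwa [norm_neg, norm_smul, norm_smul, hx, hy, mul_one, mul_one] at this

lemma chordSum_ne_zero (q : ℝ × X) : chordSum f q ≠ 0 := by
  intro h
  set s := chordParam f q with hs
  have hx := norm_eq_of_mem_sphere (f (s, q.2))
  have hy := norm_eq_of_mem_sphere (f (-s, q.2))
  have ht : q.1 = 0 := by
    rcases abs_eq_abs.1 (abs_eq_abs_of_smul_add_smul_eq_zero hx hy h) with h' | h' <;> linarith
  have hxy : (f (s, q.2) : V) = -f (-s, q.2) := by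
    rw [chordSum, ← hs, ht] at h
    simpa using eq_neg_of_add_eq_zero_left h
  have hD : 2 ≤ evenDefect f q.2 := by
    have := le_evenDefect (f := f) q.2 (chordParam_mem_Icc (f := f) (by rw [ht]; norm_num))
    rwa [← hs, hxy, ← neg_add', norm_neg, ← two_smul ℝ, norm_smul, hy, Real.norm_two,
      mul_one] at this
  have hs0 : s = 0 := by
    rw [hs, chordParam, ht, abs_zero]
    exact max_eq_left (by linarith)
  rw [hs0, neg_zero, eq_neg_iff_add_eq_zero, ← two_smul ℝ, smul_eq_zero] at hxy
  rw [hs0] at hx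
  rcases hxy with h2 | h0
  · norm_num at h2
  · simp [h0] at hx

end

def chordPlanner (f : ℝ × X → sphere (0 : V) 1) (q : ℝ × X) : sphere (0 : V) 1 :=
  ⟨‖chordSum f q‖⁻¹ • chordSum f q,
    mem_sphere_zero_iff_norm.2 (norm_smul_inv_norm (chordSum_ne_zero q))⟩

section

variable {f : ℝ × X → sphere (0 : V) 1}

lemma chordPlanner_eq_of_chordSum_eq_smul {q : ℝ × X} {c : ℝ} (hc : 0 < c)
    {z : sphere (0 : V) 1} (h : chordSum f q = c • (z : V)) : chordPlanner f q = z := by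
  apply Subtype.ext
  rw [chordPlanner, Subtype.coe_mk, h, norm_smul, norm_eq_of_mem_sphere z, mul_one,
    Real.norm_of_nonneg hc.le, smul_smul, inv_mul_cancel₀ hc.ne', one_smul]

lemma chordPlanner_one (p : X) : chordPlanner f (1, p) = f (1, p) := by
  refine chordPlanner_eq_of_chordSum_eq_smul two_pos ?_
  rw [chordSum_of_chordParam_eq_one (chordParam_of_abs_eq_one abs_one)]
  norm_num

lemma chordPlanner_neg_one (p : X) : chordPlanner f (-1, p) = f (-1, p) := by
  refine chordPlanner_eq_of_chordSum_eq_smul two_pos ?_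
  rw [chordSum_of_chordParam_eq_one (chordParam_of_abs_eq_one (by simp))]
  norm_num

lemma chordPlanner_of_even {p : X} (heven : ∀ s ∈ Icc (-1 : ℝ) 1, f (-s, p) = f (s, p))
    {t : ℝ} (ht : t ∈ Icc (-1 : ℝ) 1) : chordPlanner f (t, p) = f (1, p) := by
  refine chordPlanner_eq_of_chordSum_eq_smul two_pos ?_
  rw [chordSum_of_chordParam_eq_one
      (chordParam_of_evenDefect_eq_zero ht (evenDefect_eq_zero heven)),
    heven 1 (right_mem_Icc.2 (by norm_num)), ← add_smul]
  ring_nf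

lemma chordPlanner_neg_of_reverse {p p' : X}
    (hrev : ∀ s ∈ Icc (-1 : ℝ) 1, f (-s, p') = f (s, p)) {t : ℝ} (ht : t ∈ Icc (-1 : ℝ) 1) :
    chordPlanner f (-t, p') = chordPlanner f (t, p) := by
  have hparam : chordParam f (-t, p') = chordParam f (t, p) := by
    rw [chordParam, chordParam, abs_neg, evenDefect_eq_of_reverse hrev]
  have hs := chordParam_mem_Icc (f := f) (q := (t, p)) ht
  have hsum : chordSum f (-t, p') = chordSum f (t, p) := by
    have h := hrev (-chordParam f (t, p)) ⟨by linarith [hs.2], by linarith [hs.1]⟩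
    rw [neg_neg] at h
    rw [chordSum, chordSum, hparam, h, hrev _ ⟨by linarith [hs.1], hs.2⟩, sub_neg_eq_add,
      ← sub_eq_add_neg, add_comm]
  simp only [chordPlanner, hsum]

variable [TopologicalSpace X] {U : Set X}

lemma continuousOn_chordSum (hf : ContinuousOn f (Icc (-1) 1 ×ˢ U)) :
    ContinuousOn (chordSum f) (Icc (-1) 1 ×ˢ U) := by
  have hs := continuousOn_chordParam hf
  have hplus : ContinuousOn (fun q => (f (chordParam f q, q.2) : V)) (Icc (-1) 1 ×ˢ U) :=
    continuous_subtype_val.comp_continuousOn <| hf.comp (hs.prodMk continuousOn_snd)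
      fun q hq => ⟨Icc_subset_Icc (by norm_num) le_rfl (chordParam_mem_Icc hq.1), hq.2⟩
  have hminus : ContinuousOn (fun q => (f (-chordParam f q, q.2) : V)) (Icc (-1) 1 ×ˢ U) :=
    continuous_subtype_val.comp_continuousOn <| hf.comp (hs.neg.prodMk continuousOn_snd)
      fun q hq => by
        have h := chordParam_mem_Icc (f := f) hq.1
        exact ⟨⟨by linarith [h.2], by linarith [h.1]⟩, hq.2⟩
  exact ((continuousOn_const.add continuousOn_fst).smul hplus).add
    ((continuousOn_const.sub continuousOn_fst).smul hminus)

lemma continuousOn_chordPlanner (hf : ContinuousOn f (Icc (-1) 1 ×ˢ U)) :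
    ContinuousOn (chordPlanner f) (Icc (-1) 1 ×ˢ U) := by
  have hsum := continuousOn_chordSum hf
  rw [Topology.IsInducing.subtypeVal.continuousOn_iff]
  exact (hsum.norm.inv₀ fun q _ => norm_ne_zero_iff.2 (chordSum_ne_zero q)).smul hsum

end

end

theorem stmt9_general {V : Type*} [NormedAddCommGroup V] [InnerProductSpace ℝ V]
    {B : Type*} [MetricSpace B] {k : ℕ}
    (U' : Fin (k + 1) → Set (B × Metric.sphere (0 : V) 1 × Metric.sphere (0 : V) 1))
    (φ' : Fin (k + 1) → ℝ × (B × Metric.sphere (0 : V) 1 × Metric.sphere (0 : V) 1) →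
      Metric.sphere (0 : V) 1)
    (hU'open : ∀ i, IsOpen (U' i))
    (hU'cover : (⋃ i, U' i) = Set.univ)
    (hU'symm : ∀ i, ∀ p ∈ U' i, (p.1, p.2.2, p.2.1) ∈ U' i)
    (hφ'cont : ∀ i, ContinuousOn (φ' i) (Set.Icc (-1 : ℝ) 1 ×ˢ U' i))
    (hφ'1 : ∀ i, ∀ p ∈ U' i, φ' i (1, p) = p.2.1)
    (hφ'2 : ∀ i, ∀ p ∈ U' i, φ' i (-1, p) = p.2.2)
    (hφ'symm : ∀ i, ∀ p ∈ U' i, ∀ t ∈ Set.Icc (-1 : ℝ) 1,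
      φ' i (-t, (p.1, p.2.2, p.2.1)) = φ' i (t, p)) :
    ∃ (U : Fin (k + 1) → Set (B × Metric.sphere (0 : V) 1 × Metric.sphere (0 : V) 1))
      (φ : Fin (k + 1) → ℝ × (B × Metric.sphere (0 : V) 1 × Metric.sphere (0 : V) 1) →
        Metric.sphere (0 : V) 1),
      (∀ i, IsOpen (U i)) ∧
      (⋃ i, U i) = Set.univ ∧
      (∀ i, ∀ p ∈ U i, (p.1, p.2.2, p.2.1) ∈ U i) ∧
      (∀ i, ContinuousOn (φ i) (Set.Icc (-1 : ℝ) 1 ×ˢ U i)) ∧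
      (∀ i, ∀ p ∈ U i, φ i (1, p) = p.2.1) ∧
      (∀ i, ∀ p ∈ U i, φ i (-1, p) = p.2.2) ∧
      (∀ i, ∀ p ∈ U i, ∀ t ∈ Set.Icc (-1 : ℝ) 1,
        φ i (-t, (p.1, p.2.2, p.2.1)) = φ i (t, p)) ∧
      (∀ i, ∀ p ∈ U i, p.2.1 = p.2.2 → ∀ t ∈ Set.Icc (-1 : ℝ) 1, φ i (t, p) = p.2.1) := by
  refine ⟨U', fun i => chordPlanner (φ' i), hU'open, hU'cover, hU'symm,
    fun i => continuousOn_chordPlanner (hφ'cont i),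
    fun i p hp => (chordPlanner_one p).trans (hφ'1 i p hp),
    fun i p hp => (chordPlanner_neg_one p).trans (hφ'2 i p hp),
    fun i p hp t ht => chordPlanner_neg_of_reverse (hφ'symm i p hp) ht, ?_⟩
  rintro i ⟨b, u, v⟩ hp (rfl : u = v) t ht
  exact (chordPlanner_of_even (p := (b, u, u)) (hφ'symm i _ hp) ht).trans (hφ'1 i _ hp)

/-- Proposition 2.10 (after Grant et al., Theorem 5.2): symmetric fibrewise
motion planners can be deformed so as to be constant on the diagonal. -/
theorem stmt9 {V : Type*} [NormedAddCommGroup V] [InnerProductSpace ℝ V]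
    [FiniteDimensional ℝ V] {n : ℕ} (hn : 1 ≤ n) (hdim : Module.finrank ℝ V = n + 1)
    {B : Type*} [MetricSpace B] [CompactSpace B] {k : ℕ} (hk : 1 ≤ k)
    (U' : Fin (k + 1) → Set (B × Metric.sphere (0 : V) 1 × Metric.sphere (0 : V) 1))
    (φ' : Fin (k + 1) → ℝ × (B × Metric.sphere (0 : V) 1 × Metric.sphere (0 : V) 1) →
      Metric.sphere (0 : V) 1)
    (hU'open : ∀ i, IsOpen (U' i))
    (hU'cover : (⋃ i, U' i) = Set.univ)
    (hU'symm : ∀ i, ∀ p ∈ U' i, (p.1, p.2.2, p.2.1) ∈ U' i)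
    (hφ'cont : ∀ i, ContinuousOn (φ' i) (Set.Icc (-1 : ℝ) 1 ×ˢ U' i))
    (hφ'1 : ∀ i, ∀ p ∈ U' i, φ' i (1, p) = p.2.1)
    (hφ'2 : ∀ i, ∀ p ∈ U' i, φ' i (-1, p) = p.2.2)
    (hφ'symm : ∀ i, ∀ p ∈ U' i, ∀ t ∈ Set.Icc (-1 : ℝ) 1,
      φ' i (-t, (p.1, p.2.2, p.2.1)) = φ' i (t, p)) :
    ∃ (U : Fin (k + 1) → Set (B × Metric.sphere (0 : V) 1 × Metric.sphere (0 : V) 1))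
      (φ : Fin (k + 1) → ℝ × (B × Metric.sphere (0 : V) 1 × Metric.sphere (0 : V) 1) →
        Metric.sphere (0 : V) 1),
      (∀ i, IsOpen (U i)) ∧
      (⋃ i, U i) = Set.univ ∧
      (∀ i, ∀ p ∈ U i, (p.1, p.2.2, p.2.1) ∈ U i) ∧
      (∀ i, ContinuousOn (φ i) (Set.Icc (-1 : ℝ) 1 ×ˢ U i)) ∧
      (∀ i, ∀ p ∈ U i, φ i (1, p) = p.2.1) ∧
      (∀ i, ∀ p ∈ U i, φ i (-1, p) = p.2.2) ∧
      (∀ i, ∀ p ∈ U i, ∀ t ∈ Set.Icc (-1 : ℝ) 1,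
        φ i (-t, (p.1, p.2.2, p.2.1)) = φ i (t, p)) ∧
      (∀ i, ∀ p ∈ U i, p.2.1 = p.2.2 → ∀ t ∈ Set.Icc (-1 : ℝ) 1, φ i (t, p) = p.2.1) :=
  stmt9_general U' φ' hU'open hU'cover hU'symm hφ'cont hφ'1 hφ'2 hφ'symm
end
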